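/- arXiv:2204.03908 — 5 statements merged into one kernel-verified Lean document; each statement's English description precedes it below -/
import Mathlib

section
/- Let ω > 0 and let ξ be a real number with 0 < ξ < π/ω, and define G : [0,ω]×[0,ω] → ℝ by G(t,s) = cos(ξ(t−s−ω/2))/(2ξ sin(ξω/2)) if 0 ≤ s ≤ t ≤ ω and G(t,s) = cos(ξ(t−s+ω/2))/(2ξ sin(ξω/2)) if 0 ≤ t < s ≤ ω. Then G(t,s) > 0 for all (t,s) ∈ [0,ω]×[0,ω]. -/
open Real Set

/-! Both branches of `G` are `cos (ξ x)` with `|x| ≤ ω / 2`, and `ξ ω < π` puts `ξ x` inside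
`(-π/2, π/2)`, where cosine is positive; the denominator is positive for the same reason. -/

lemma cos_mul_pos_of_abs_le_half {ξ ω x : ℝ} (hξ : 0 < ξ) (hξω : ξ * ω < π)
    (hx : |x| ≤ ω / 2) : 0 < cos (ξ * x) := by
  have h : |ξ * x| < π / 2 :=
    calc |ξ * x| = ξ * |x| := by rw [abs_mul, abs_of_pos hξ]
      _ ≤ ξ * (ω / 2) := mul_le_mul_of_nonneg_left hx hξ.le
      _ < π / 2 := by linarith
  exact cos_pos_of_mem_Ioo (abs_lt.mp h)

lemma sin_mul_half_pos {ξ ω : ℝ} (hξ : 0 < ξ) (hω : 0 < ω) (hξω : ξ * ω < π) :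
    0 < sin (ξ * ω / 2) :=
  sin_pos_of_pos_of_lt_pi (by positivity) (by linarith [pi_pos])

theorem green_function_positive
    (ω ξ : ℝ) (hω : 0 < ω) (hξ : 0 < ξ) (hξπ : ξ < Real.pi / ω)
    (G : ℝ → ℝ → ℝ)
    (hG : ∀ t ∈ Set.Icc 0 ω, ∀ s ∈ Set.Icc 0 ω,
      G t s = if s ≤ t then Real.cos (ξ * (t - s - ω / 2)) / (2 * ξ * Real.sin (ξ * ω / 2))
              else Real.cos (ξ * (t - s + ω / 2)) / (2 * ξ * Real.sin (ξ * ω / 2))) :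
    ∀ t ∈ Set.Icc 0 ω, ∀ s ∈ Set.Icc 0 ω, 0 < G t s := by
  have hξω : ξ * ω < π := (lt_div_iff₀ hω).mp hξπ
  have hden : 0 < 2 * ξ * sin (ξ * ω / 2) := by
    have := sin_mul_half_pos hξ hω hξω
    positivity
  rintro t ⟨ht0, htω⟩ s ⟨hs0, hsω⟩
  rw [hG t ⟨ht0, htω⟩ s ⟨hs0, hsω⟩]
  split_ifs <;>
    exact div_pos (cos_mul_pos_of_abs_le_half hξ hξω
      (abs_le.mpr ⟨by linarith, by linarith⟩)) hden
end

section
/- Let ω > 0 and let ξ be a real number with 0 < ξ < π/ω, and define G : [0,ω]×[0,ω] → ℝ by G(t,s) = cos(ξ(t−s−ω/2))/(2ξ sin(ξω/2)) if 0 ≤ s ≤ t ≤ ω and G(t,s) = cos(ξ(t−s+ω/2))/(2ξ sin(ξω/2)) if 0 ≤ t < s ≤ ω. Then the minimum of G over [0,ω]×[0,ω] equals cos(ξω/2)/(2ξ sin(ξω/2)) and the maximum of G over [0,ω]×[0,ω] equals 1/(2ξ sin(ξω/2)); in particular the minimum is attained (e.g. at t = s = 0 with the pair (ω,0)-type corner,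 i.e. at points with |t−s| ∈ {0, ω}) and the maximum is attained at points with |t−s| = ω/2. -/
open Real Set

/- The argument of the cosine in either branch of `G` is `ξ x` with `|x| ≤ ω / 2`, and `cos` is
decreasing on `[0, π]` while `ξ ω / 2 < π / 2`. Hence `cos (ξ ω / 2) ≤ cos (ξ x) ≤ 1`, and the
denominator `2 ξ sin (ξ ω / 2)` is positive. The bounds are attained at `x = ± ω / 2` and at
`x = 0`. -/

lemma cos_le_cos_mul_of_abs_le {ξ ω x : ℝ} (hξ : 0 ≤ ξ) (hξω : ξ * ω ≤ 2 * π)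
    (hx : |x| ≤ ω / 2) : cos (ξ * ω / 2) ≤ cos (ξ * x) := by
  rw [← cos_abs (ξ * x), abs_mul, abs_of_nonneg hξ]
  refine cos_le_cos_of_nonneg_of_le_pi (by positivity) (by linarith) ?_
  calc ξ * |x| ≤ ξ * (ω / 2) := mul_le_mul_of_nonneg_left hx hξ
    _ = ξ * ω / 2 := by ring

section

variable {ω t s : ℝ}

lemma abs_sub_sub_half_le (hs : 0 ≤ s) (ht : t ≤ ω) (hst : s ≤ t) :
    |t - s - ω / 2| ≤ ω / 2 :=
  abs_le.mpr ⟨by linarith, by linarith⟩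

lemma abs_sub_add_half_le (hs : s ≤ ω) (ht : 0 ≤ t) (hts : t ≤ s) :
    |t - s + ω / 2| ≤ ω / 2 :=
  abs_le.mpr ⟨by linarith, by linarith⟩

end

theorem green_function_min_max
    (ω ξ : ℝ) (hω : 0 < ω) (hξ : 0 < ξ) (hξπ : ξ < Real.pi / ω)
    (G : ℝ → ℝ → ℝ)
    (hG : ∀ t ∈ Set.Icc 0 ω, ∀ s ∈ Set.Icc 0 ω,
      G t s = if s ≤ t then Real.cos (ξ * (t - s - ω / 2)) / (2 * ξ * Real.sin (ξ * ω / 2))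
              else Real.cos (ξ * (t - s + ω / 2)) / (2 * ξ * Real.sin (ξ * ω / 2))) :
    (∀ t ∈ Set.Icc 0 ω, ∀ s ∈ Set.Icc 0 ω,
      Real.cos (ξ * ω / 2) / (2 * ξ * Real.sin (ξ * ω / 2)) ≤ G t s) ∧
    (∃ t ∈ Set.Icc 0 ω, ∃ s ∈ Set.Icc 0 ω, (|t - s| = 0 ∨ |t - s| = ω) ∧
      G t s = Real.cos (ξ * ω / 2) / (2 * ξ * Real.sin (ξ * ω / 2))) ∧
    (∀ t ∈ Set.Icc 0 ω, ∀ s ∈ Set.Icc 0 ω,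
      G t s ≤ 1 / (2 * ξ * Real.sin (ξ * ω / 2))) ∧
    (∃ t ∈ Set.Icc 0 ω, ∃ s ∈ Set.Icc 0 ω, |t - s| = ω / 2 ∧
      G t s = 1 / (2 * ξ * Real.sin (ξ * ω / 2))) := by
  have hξω : ξ * ω < π := (lt_div_iff₀ hω).mp hξπ
  have hD : 0 < 2 * ξ * sin (ξ * ω / 2) :=
    mul_pos (by positivity)
      (sin_pos_of_pos_of_lt_pi (by positivity) (by linarith [mul_pos hξ hω]))
  have h0 : (0 : ℝ) ∈ Icc 0 ω := left_mem_Icc.mpr hω.le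
  have hhalf : ω / 2 ∈ Icc 0 ω := ⟨by linarith, by linarith⟩
  refine ⟨fun t ht s hs => ?_, ⟨0, h0, 0, h0, by simp, ?_⟩,
    fun t ht s hs => ?_, ⟨ω / 2, hhalf, 0, h0, by simpa using hhalf.1, ?_⟩⟩
  · rw [hG t ht s hs]
    split_ifs with hst <;> refine div_le_div_of_nonneg_right ?_ hD.le <;>
      refine cos_le_cos_mul_of_abs_le hξ.le (by linarith [pi_pos]) ?_
    exacts [abs_sub_sub_half_le hs.1 ht.2 hst, abs_sub_add_half_le hs.2 ht.1 (not_le.mp hst).le]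
  · rw [hG 0 h0 0 h0, if_pos le_rfl, ← cos_neg]
    ring_nf
  · rw [hG t ht s hs]
    split_ifs <;> exact div_le_div_of_nonneg_right (cos_le_one _) hD.le
  · rw [hG _ hhalf 0 h0, if_pos hhalf.1]
    simp
end

section
/- Let ω > 0 and let p, l : ℝ → ℝ be continuous ω-periodic functions. Assume condition (A₁): there exist continuous ω-periodic functions a₁, a₂ : ℝ → ℝ, with a₁ continuously differentiable, such that ∫₀^ω a₁(t) dt > 0, ∫₀^ω a₂(t) dt > 0, a₁(t) + a₂(t) = p(t) and a₁'(t) + a₁(t)a₂(t) = l(t) for all t ∈ ℝ. Then every Green's function G of the ω-periodic problem u'' + p(t)u' + l(t)u = h(t), u(0) = u(ω), u'(0) = u'(ω), satisfies G(t,s) > 0 for all (t,s) ∈ [0,ω]×[0,ω]. -/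
open Real Set

/-- `G` is a Green's function for the `ω`-periodic problem
`u'' + p(t)u' + l(t)u = h(t)`, `u(0) = u(ω)`, `u'(0) = u'(ω)`. -/
def IsGreensFunction (ω : ℝ) (p l : ℝ → ℝ) (G : ℝ → ℝ → ℝ) : Prop :=
  ContinuousOn (fun ts : ℝ × ℝ => G ts.1 ts.2) (Set.Icc 0 ω ×ˢ Set.Icc 0 ω) ∧
  ContinuousOn (fun ts : ℝ × ℝ => deriv (fun t => G t ts.2) ts.1)
    (Set.Icc 0 ω ×ˢ Set.Icc 0 ω) ∧
  ∀ h : ℝ → ℝ, Continuous h → Function.Periodic h ω →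
    ContDiffOn ℝ 2 (fun t => ∫ s in (0:ℝ)..ω, G t s * h s) (Set.Icc 0 ω) ∧
    (∀ t ∈ Set.Icc 0 ω,
      deriv (deriv (fun t => ∫ s in (0:ℝ)..ω, G t s * h s)) t
        + p t * deriv (fun t => ∫ s in (0:ℝ)..ω, G t s * h s) t
        + l t * (∫ s in (0:ℝ)..ω, G t s * h s) = h t) ∧
    (∫ s in (0:ℝ)..ω, G 0 s * h s) = (∫ s in (0:ℝ)..ω, G ω s * h s) ∧
    deriv (fun t => ∫ s in (0:ℝ)..ω, G t s * h s) 0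
      = deriv (fun t => ∫ s in (0:ℝ)..ω, G t s * h s) ω

/-!
Under (A₁) the operator factors as `u'' + p u' + l u = (D + a₂)(D + a₁) u`. For the periodic
problem `f' + a f = g` with `∫ a > 0`, the integrating factor `exp ∫ a` gives `f ≥ c ∫ g` whenever
`g ≥ 0`; applied to `v = u' + a₁ u` and then to `u`, this yields `u ≥ c ∫ h` for every periodic
solution with `h ≥ 0`. Hence `∫ G(t, s) h(s) ds ≥ c ∫ h`, and testing against periodic bumps
concentrating at `s` gives `G(t, s) ≥ c > 0`.

Since `IsGreensFunction` reads `u'` at the endpoints through `deriv`, the boundary conditions may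
hold only by junk values; this forces `l(0) u(0) = h(0)`, a proper hyperplane condition on `h`,
and perturbing `h` off it recovers the estimate in the limit.
-/

open MeasureTheory intervalIntegral Filter Topology

lemma cos_le_cos_of_le_of_le_two_pi_sub {β θ : ℝ} (hβ : 0 ≤ β) (hβθ : β ≤ θ)
    (hθ : θ ≤ 2 * π - β) : cos θ ≤ cos β := by
  rcases le_total θ π with hθπ | hπθ
  · exact cos_le_cos_of_nonneg_of_le_pi hβ hθπ hβθ
  · rw [← cos_two_pi_sub θ]
    exact cos_le_cos_of_nonneg_of_le_pi hβ (by linarith) (by linarith)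

lemma integral_pos_of_continuous_of_nonneg {f : ℝ → ℝ} {a b x : ℝ} (hf : Continuous f)
    (hf0 : ∀ y, 0 ≤ f y) (hx : x ∈ Ioo a b) (hfx : f x ≠ 0) : 0 < ∫ y in a..b, f y := by
  rw [integral_pos_iff_support_of_nonneg_ae (ae_of_all _ hf0) (hf.intervalIntegrable a b)]
  refine ⟨hx.1.trans hx.2, ?_⟩
  calc 0 < volume (Function.support f ∩ Ioo a b) :=
        (hf.isOpen_support.inter isOpen_Ioo).measure_pos volume ⟨x, hfx, hx⟩
    _ ≤ volume (Function.support f ∩ Ioc a b) :=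
        measure_mono (inter_subset_inter_right _ Ioo_subset_Ioc_self)

lemma le_of_forall_pos_add_mul_le {a b a' b' : ℝ} (h : ∀ μ > 0, a + μ * b ≤ a' + μ * b') :
    a ≤ a' := by
  have hlim : ∀ c d : ℝ, Tendsto (fun μ => c + μ * d) (𝓝[>] 0) (𝓝 c) := fun c d =>
    (Continuous.tendsto' (f := fun μ : ℝ => c + μ * d) (by fun_prop) 0 c (by simp)).mono_left
      nhdsWithin_le_nhds
  exact le_of_tendsto_of_tendsto (hlim a b) (hlim a' b') (eventually_nhdsWithin_of_forall h)

lemma ContDiffOn.deriv_eq_derivWithin_or_eq_zero {u : ℝ → ℝ} {a b e : ℝ} (hab : a < b)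
    (hu : ContDiffOn ℝ 1 u (Icc a b)) (he : e ∈ Icc a b) :
    deriv u e = derivWithin u (Icc a b) e ∨ (deriv u e = 0 ∧ deriv (deriv u) e = 0) := by
  by_cases hd : DifferentiableAt ℝ u e
  · exact Or.inl (hd.derivWithin (uniqueDiffOn_Icc hab e he)).symm
  have hu0 : deriv u e = 0 := deriv_zero_of_not_differentiableAt hd
  by_cases hw : derivWithin u (Icc a b) e = 0
  · exact Or.inl (hu0.trans hw.symm)
  refine Or.inr ⟨hu0, deriv_zero_of_not_differentiableAt fun hdd => hw ?_⟩
  have : (𝓝[Ioo a b] e).NeBot :=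
    mem_closure_iff_nhdsWithin_neBot.1 (by rwa [closure_Ioo hab.ne])
  have hlim : Tendsto (deriv u) (𝓝[Ioo a b] e) (𝓝 (derivWithin u (Icc a b) e)) :=
    Tendsto.congr' (eventually_nhdsWithin_of_forall fun y hy =>
        derivWithin_of_mem_nhds (Icc_mem_nhds hy.1 hy.2))
      ((hu.continuousOn_derivWithin (uniqueDiffOn_Icc hab) le_rfl e he).mono
        Ioo_subset_Icc_self)
  rw [tendsto_nhds_unique hlim (hdd.continuousAt.tendsto.mono_left nhdsWithin_le_nhds), hu0]

lemma ContDiffOn.hasDerivAt_deriv_of_mem_Ioo {u : ℝ → ℝ} {a b x : ℝ}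
    (hu : ContDiffOn ℝ 2 u (Icc a b)) (hx : x ∈ Ioo a b) :
    HasDerivAt u (deriv u x) x ∧ HasDerivAt (deriv u) (deriv (deriv u) x) x := by
  have hu' : ContDiffOn ℝ 2 u (Ioo a b) := hu.mono Ioo_subset_Icc_self
  have hI : Ioo a b ∈ 𝓝 x := Ioo_mem_nhds hx.1 hx.2
  have hu'' : ContDiffOn ℝ 1 (deriv u) (Ioo a b) :=
    hu'.deriv_of_isOpen isOpen_Ioo (by norm_num)
  exact ⟨((hu'.differentiableOn two_ne_zero x hx).differentiableAt hI).hasDerivAt,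
    ((hu''.differentiableOn one_ne_zero x hx).differentiableAt hI).hasDerivAt⟩

lemma exists_pos_lowerBound_firstOrder {ω : ℝ} {a : ℝ → ℝ} (hω : 0 < ω) (ha : Continuous a)
    (ha_int : 0 < ∫ t in (0:ℝ)..ω, a t) :
    ∃ c > 0, ∀ f g : ℝ → ℝ, ContinuousOn f (Icc 0 ω) → ContinuousOn g (Icc 0 ω) →
      (∀ x ∈ Icc 0 ω, 0 ≤ g x) → f 0 = f ω →
      (∀ x ∈ Ioo 0 ω, HasDerivAt f (g x - a x * f x) x) →
      ∀ x ∈ Icc 0 ω, c * ∫ t in (0:ℝ)..ω, g t ≤ f x := by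
  set E : ℝ → ℝ := fun t => exp (∫ s in (0:ℝ)..t, a s) with hE_def
  have hE_deriv : ∀ t, HasDerivAt E (a t * E t) t := fun t => by
    simpa [mul_comm] using (ha.integral_hasStrictDerivAt 0 t).hasDerivAt.exp
  have hE : Continuous E := continuous_iff_continuousAt.2 fun t => (hE_deriv t).continuousAt
  have hE_pos : ∀ t, 0 < E t := fun t => exp_pos _
  have hE0 : E 0 = 1 := by simp [hE_def]
  have hEω : 1 < E ω := one_lt_exp_iff.2 ha_int
  obtain ⟨t₁, -, ht₁⟩ := isCompact_Icc.exists_isMinOn (nonempty_Icc.2 hω.le) hE.continuousOn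
  obtain ⟨t₂, -, ht₂⟩ := isCompact_Icc.exists_isMaxOn (nonempty_Icc.2 hω.le) hE.continuousOn
  refine ⟨E t₁ / (E t₂ * (E ω - 1)),
    div_pos (hE_pos _) (mul_pos (hE_pos _) (by linarith)), ?_⟩
  intro f g hf hg hg0 hf_per hf_deriv x hx
  -- the integrating factor `E` turns `f' + a f = g` into `(E f)' = E g`
  have hFTC : ∀ y ∈ Icc 0 ω, E y * f y - f 0 = ∫ t in (0:ℝ)..y, E t * g t := by
    intro y hy
    have hsub : Icc 0 y ⊆ Icc 0 ω := Icc_subset_Icc_right hy.2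
    have := integral_eq_sub_of_hasDeriv_right_of_le (f := fun t => E t * f t)
      (f' := fun t => E t * g t) hy.1
      ((hE.continuousOn.mul hf).mono hsub) (fun t ht => ?_)
      (((hE.continuousOn.mul hg).mono hsub).intervalIntegrable_of_Icc hy.1)
    · rw [this, hE0, one_mul]
    · exact (((hE_deriv t).mul (hf_deriv t ⟨ht.1, ht.2.trans_le hy.2⟩)).congr_deriv
        (by ring)).hasDerivWithinAt
  have hg_int : E t₁ * ∫ t in (0:ℝ)..ω, g t ≤ ∫ t in (0:ℝ)..ω, E t * g t := by
    rw [← intervalIntegral.integral_const_mul]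
    exact integral_mono_on hω.le ((continuousOn_const.mul hg).intervalIntegrable_of_Icc hω.le)
      ((hE.continuousOn.mul hg).intervalIntegrable_of_Icc hω.le)
      fun t ht => mul_le_mul_of_nonneg_right (ht₁ ht) (hg0 t ht)
  have hf0 : E t₁ * (∫ t in (0:ℝ)..ω, g t) / (E ω - 1) ≤ f 0 := by
    rw [div_le_iff₀ (by linarith)]
    have := hFTC ω (right_mem_Icc.2 hω.le)
    rw [← hf_per] at this
    linarith
  have hfx : f 0 ≤ E x * f x := by
    have : 0 ≤ ∫ t in (0:ℝ)..x, E t * g t := integral_nonneg hx.1 fun t ht =>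
      mul_nonneg (hE_pos t).le (hg0 t ⟨ht.1, ht.2.trans hx.2⟩)
    linarith [hFTC x hx]
  have hf0_nonneg : 0 ≤ f 0 :=
    (div_nonneg (mul_nonneg (hE_pos _).le (integral_nonneg hω.le hg0)) (by linarith)).trans hf0
  have hfx_nonneg : 0 ≤ f x := (mul_nonneg_iff_of_pos_left (hE_pos x)).1 (hf0_nonneg.trans hfx)
  calc E t₁ / (E t₂ * (E ω - 1)) * ∫ t in (0:ℝ)..ω, g t
      = E t₁ * (∫ t in (0:ℝ)..ω, g t) / (E ω - 1) / E t₂ := by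
        field_simp
    _ ≤ f 0 / E t₂ := by gcongr
    _ ≤ f x := by
        rw [div_le_iff₀ (hE_pos _)]
        have : E x * f x ≤ E t₂ * f x := mul_le_mul_of_nonneg_right (ht₂ hx) hfx_nonneg
        linarith

/-- Classical solutions of the periodic problem. The boundary condition on `u'` is read through
one-sided derivatives, since `deriv u` is junk at `0` and `ω` when `u` is only controlled on
`[0, ω]`. -/
def IsPeriodicSolution (ω : ℝ) (p l h u : ℝ → ℝ) : Prop :=
  ContDiffOn ℝ 2 u (Icc 0 ω) ∧
  (∀ t ∈ Ioo 0 ω, deriv (deriv u) t + p t * deriv u t + l t * u t = h t) ∧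
  u 0 = u ω ∧ derivWithin u (Icc 0 ω) 0 = derivWithin u (Icc 0 ω) ω

lemma exists_pos_lowerBound_of_factorization {ω : ℝ} {p l a₁ a₂ : ℝ → ℝ} (hω : 0 < ω)
    (ha₁ : ContDiff ℝ 1 a₁) (ha₁per : Function.Periodic a₁ ω) (ha₂ : Continuous a₂)
    (ha₁int : 0 < ∫ t in (0:ℝ)..ω, a₁ t) (ha₂int : 0 < ∫ t in (0:ℝ)..ω, a₂ t)
    (hsum : ∀ t, a₁ t + a₂ t = p t) (hprod : ∀ t, deriv a₁ t + a₁ t * a₂ t = l t) :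
    ∃ c > 0, ∀ h u : ℝ → ℝ, ContinuousOn h (Icc 0 ω) → (∀ t ∈ Icc 0 ω, 0 ≤ h t) →
      IsPeriodicSolution ω p l h u → ∀ t ∈ Icc 0 ω, c * ∫ s in (0:ℝ)..ω, h s ≤ u t := by
  obtain ⟨c₁, hc₁, H₁⟩ := exists_pos_lowerBound_firstOrder hω ha₁.continuous ha₁int
  obtain ⟨c₂, hc₂, H₂⟩ := exists_pos_lowerBound_firstOrder hω ha₂ ha₂int
  refine ⟨c₁ * (ω * c₂), by positivity, ?_⟩
  rintro h u hh hh0 ⟨hu, hODE, hu_per, hu'_per⟩ x hx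
  have hu'_eq : ∀ y ∈ Ioo 0 ω, derivWithin u (Icc 0 ω) y = deriv u y := fun y hy =>
    derivWithin_of_mem_nhds (Icc_mem_nhds hy.1 hy.2)
  -- `u'' + p u' + l u = (D + a₂)(D + a₁) u`, so `v = u' + a₁ u` solves `v' + a₂ v = h`
  set v : ℝ → ℝ := fun t => derivWithin u (Icc 0 ω) t + a₁ t * u t with hv
  have hv_cont : ContinuousOn v (Icc 0 ω) :=
    (hu.continuousOn_derivWithin (uniqueDiffOn_Icc hω) (by norm_num)).add
      (ha₁.continuous.continuousOn.mul hu.continuousOn)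
  have hv_per : v 0 = v ω := by simp only [hv, hu'_per, hu_per, ha₁per.eq]
  have hv_deriv : ∀ y ∈ Ioo 0 ω, HasDerivAt v (h y - a₂ y * v y) y := by
    intro y hy
    obtain ⟨hu₁, hu₂⟩ := hu.hasDerivAt_deriv_of_mem_Ioo hy
    have hv_eq : (fun t => deriv u t + a₁ t * u t) =ᶠ[𝓝 y] v := by
      filter_upwards [Ioo_mem_nhds hy.1 hy.2] with t ht
      simp only [hv, hu'_eq t ht]
    refine ((hu₂.add ((ha₁.differentiable one_ne_zero y).hasDerivAt.mul hu₁)).congr_of_eventuallyEq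
      hv_eq.symm).congr_deriv ?_
    simp only [hv, hu'_eq y hy]
    linear_combination hODE y hy + deriv u y * hsum y + u y * hprod y
  have hv_low : ∀ y ∈ Icc 0 ω, c₂ * ∫ s in (0:ℝ)..ω, h s ≤ v y :=
    H₂ v h hv_cont hh hh0 hv_per hv_deriv
  have hv0 : ∀ y ∈ Icc 0 ω, 0 ≤ v y := fun y hy =>
    (mul_nonneg hc₂.le (integral_nonneg hω.le hh0)).trans (hv_low y hy)
  have hu_deriv : ∀ y ∈ Ioo 0 ω, HasDerivAt u (v y - a₁ y * u y) y := fun y hy =>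
    (hu.hasDerivAt_deriv_of_mem_Ioo hy).1.congr_deriv (by simp only [hv, hu'_eq y hy]; ring)
  calc c₁ * (ω * c₂) * ∫ s in (0:ℝ)..ω, h s
      = c₁ * ∫ _ in (0:ℝ)..ω, c₂ * ∫ s in (0:ℝ)..ω, h s := by simp; ring
    _ ≤ c₁ * ∫ t in (0:ℝ)..ω, v t := by
        gcongr
        exact integral_mono_on hω.le intervalIntegrable_const
          (hv_cont.intervalIntegrable_of_Icc hω.le) hv_low
    _ ≤ u x := H₁ u v hu.continuousOn hv_cont hv0 hu_per hu_deriv x hx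

noncomputable def periodicBump (ω s₀ ε : ℝ) (s : ℝ) : ℝ :=
  max (cos (2 * π * (s - s₀) / ω) - cos (2 * π * ε / ω)) 0

section periodicBump

variable {ω s₀ ε : ℝ}

lemma continuous_periodicBump : Continuous (periodicBump ω s₀ ε) := by
  unfold periodicBump
  fun_prop

lemma periodicBump_nonneg (s : ℝ) : 0 ≤ periodicBump ω s₀ ε s := le_max_right _ _

lemma periodic_periodicBump (hω : ω ≠ 0) : Function.Periodic (periodicBump ω s₀ ε) ω := by
  intro s
  have : 2 * π * (s + ω - s₀) / ω = 2 * π * (s - s₀) / ω + 2 * π := by field_simp; ring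
  simp only [periodicBump, this, cos_add_two_pi]

lemma periodicBump_eq_zero (hω : 0 < ω) (hε : 0 ≤ ε) (hs₀ : ε ≤ s₀) (hs₀' : ε ≤ ω - s₀)
    {s : ℝ} (hs : s ∈ Icc 0 ω) (hfar : ε ≤ |s - s₀|) : periodicBump ω s₀ ε s = 0 := by
  refine max_eq_right (sub_nonpos.2 ?_)
  rw [← cos_abs (2 * π * (s - s₀) / ω), abs_div, abs_mul, abs_of_pos two_pi_pos,
    abs_of_pos hω]
  have hnear : |s - s₀| ≤ ω - ε := abs_le.2 ⟨by linarith [hs.1], by linarith [hs.2]⟩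
  apply cos_le_cos_of_le_of_le_two_pi_sub (by positivity)
  · gcongr
  · calc 2 * π * |s - s₀| / ω ≤ 2 * π * (ω - ε) / ω := by gcongr
      _ = 2 * π - 2 * π * ε / ω := by field_simp

lemma periodicBump_zero (hω : 0 < ω) (hε : 0 ≤ ε) (hs₀ : ε ≤ s₀) (hs₀' : ε ≤ ω - s₀) :
    periodicBump ω s₀ ε 0 = 0 :=
  periodicBump_eq_zero hω hε hs₀ hs₀' (left_mem_Icc.2 hω.le) (by
    rw [zero_sub, abs_neg, abs_of_nonneg (hε.trans hs₀)]
    exact hs₀)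

lemma integral_periodicBump_pos (hω : 0 < ω) (hε : 0 < ε) (hs₀ : ε ≤ s₀) (hs₀' : ε ≤ ω - s₀) :
    0 < ∫ s in (0:ℝ)..ω, periodicBump ω s₀ ε s := by
  refine integral_pos_of_continuous_of_nonneg continuous_periodicBump periodicBump_nonneg
    (x := s₀) ⟨by linarith, by linarith⟩ (ne_of_gt ?_)
  have hπ : 2 * π * ε / ω ≤ π := by
    rw [div_le_iff₀ hω]
    nlinarith [pi_pos]
  have := cos_lt_cos_of_nonneg_of_le_pi le_rfl hπ (by positivity)
  simp only [periodicBump, sub_self, mul_zero, zero_div, cos_zero] at this ⊢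
  exact lt_max_of_lt_left (by linarith)

lemma le_of_forall_le_integral_mul_periodicBump (hω : 0 < ω) {F : ℝ → ℝ} {c : ℝ}
    (hF : ContinuousOn F (Icc 0 ω))
    (hc : ∀ s₀ ε, 0 < ε → ε ≤ s₀ → ε ≤ ω - s₀ →
      c * ∫ s in (0:ℝ)..ω, periodicBump ω s₀ ε s ≤
        ∫ s in (0:ℝ)..ω, F s * periodicBump ω s₀ ε s) :
    ∀ s ∈ Icc 0 ω, c ≤ F s := by
  have hint : ∀ s₀ ∈ Ioo 0 ω, c ≤ F s₀ := by
    intro s₀ hs₀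
    refine le_of_forall_pos_le_add fun δ hδ => ?_
    obtain ⟨r, hr, hFr⟩ :=
      Metric.continuousWithinAt_iff.1 (hF s₀ (Ioo_subset_Icc_self hs₀)) δ hδ
    set ε := min (r / 2) (min s₀ (ω - s₀))
    have hε : 0 < ε := lt_min (by linarith) (lt_min hs₀.1 (by linarith [hs₀.2]))
    have hε₁ : ε ≤ s₀ := (min_le_right _ _).trans (min_le_left _ _)
    have hε₂ : ε ≤ ω - s₀ := (min_le_right _ _).trans (min_le_right _ _)
    have hbound : ∀ s ∈ Icc 0 ω,
        F s * periodicBump ω s₀ ε s ≤ (F s₀ + δ) * periodicBump ω s₀ ε s := by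
      intro s hs
      rcases lt_or_ge |s - s₀| ε with hnear | hfar
      · have : dist s s₀ < r := by
          rw [Real.dist_eq]
          linarith [min_le_left (r / 2) (min s₀ (ω - s₀))]
        have := hFr hs this
        rw [Real.dist_eq, abs_lt] at this
        exact mul_le_mul_of_nonneg_right (by linarith) (periodicBump_nonneg s)
      · simp [periodicBump_eq_zero hω hε.le hε₁ hε₂ hs hfar]
    have hle : c * ∫ s in (0:ℝ)..ω, periodicBump ω s₀ ε s ≤
        (F s₀ + δ) * ∫ s in (0:ℝ)..ω, periodicBump ω s₀ ε s := by
      refine (hc s₀ ε hε hε₁ hε₂).trans ?_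
      rw [← intervalIntegral.integral_const_mul]
      exact integral_mono_on hω.le
        ((hF.mul continuous_periodicBump.continuousOn).intervalIntegrable_of_Icc hω.le)
        (continuous_periodicBump.intervalIntegrable _ _ |>.const_mul _) hbound
    exact le_of_mul_le_mul_right hle (integral_periodicBump_pos hω hε hε₁ hε₂)
  intro s hs
  exact ContinuousWithinAt.closure_le (f := fun _ => c) (by rwa [closure_Ioo hω.ne])
    continuousWithinAt_const ((hF s hs).mono Ioo_subset_Icc_self) hint

end periodicBump

namespace IsGreensFunction

variable {ω : ℝ} {p l : ℝ → ℝ} {G : ℝ → ℝ → ℝ}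

lemma continuousOn_apply (hG : IsGreensFunction ω p l G) {t : ℝ} (ht : t ∈ Icc 0 ω) :
    ContinuousOn (G t) (Icc 0 ω) :=
  hG.1.comp (f := fun s => (t, s)) (by fun_prop) fun _ hs => ⟨ht, hs⟩

lemma integral_mul_add_mul (hG : IsGreensFunction ω p l G) (hω : 0 ≤ ω) {t : ℝ}
    (ht : t ∈ Icc 0 ω) {h g : ℝ → ℝ} (hh : Continuous h) (hg : Continuous g) (μ : ℝ) :
    ∫ s in (0:ℝ)..ω, G t s * (h s + μ * g s) =
      (∫ s in (0:ℝ)..ω, G t s * h s) + μ * ∫ s in (0:ℝ)..ω, G t s * g s := by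
  have hint : ∀ k : ℝ → ℝ, Continuous k →
      IntervalIntegrable (fun s => G t s * k s) volume 0 ω := fun k hk =>
    ((hG.continuousOn_apply ht).mul hk.continuousOn).intervalIntegrable_of_Icc hω
  rw [← intervalIntegral.integral_const_mul,
    ← integral_add (hint h hh) ((hint g hg).const_mul μ)]
  congr 1 with s
  ring

/-- The second alternative is what remains when a boundary condition of `IsGreensFunction` holds
only through junk values of `deriv` at an endpoint. -/
lemma isPeriodicSolution_or (hG : IsGreensFunction ω p l G) (hω : 0 < ω)
    (hlper : Function.Periodic l ω) {h : ℝ → ℝ} (hh : Continuous h)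
    (hhper : Function.Periodic h ω) :
    IsPeriodicSolution ω p l h (fun t => ∫ s in (0:ℝ)..ω, G t s * h s) ∨
      l 0 * ∫ s in (0:ℝ)..ω, G 0 s * h s = h 0 := by
  obtain ⟨hu, hODE, hu_per, hu'_per⟩ := hG.2.2 h hh hhper
  have h0 := left_mem_Icc.2 hω.le
  have hω' := right_mem_Icc.2 hω.le
  rcases hu.of_le one_le_two |>.deriv_eq_derivWithin_or_eq_zero hω h0 with h₀ | ⟨h₀, h₀'⟩
  · rcases hu.of_le one_le_two |>.deriv_eq_derivWithin_or_eq_zero hω hω' with h₁ | ⟨h₁, h₁'⟩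
    · exact Or.inl ⟨hu, fun t ht => hODE t (Ioo_subset_Icc_self ht), hu_per,
        h₀ ▸ h₁ ▸ hu'_per⟩
    · have := hODE ω hω'
      rw [h₁, h₁', hlper.eq, hhper.eq, ← hu_per] at this
      exact Or.inr (by simpa using this)
  · have := hODE 0 h0
    rw [h₀, h₀'] at this
    exact Or.inr (by simpa using this)

/-- Testing against `1` gives `l 0 ≠ 0`; bumps vanishing at `0` then force `G 0 = 0` on `[0, ω]`,
a contradiction. -/
lemma exists_nonneg_ne (hG : IsGreensFunction ω p l G) (hω : 0 < ω) :
    ∃ g : ℝ → ℝ, Continuous g ∧ Function.Periodic g ω ∧ (∀ s, 0 ≤ g s) ∧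
      l 0 * ∫ s in (0:ℝ)..ω, G 0 s * g s ≠ g 0 := by
  by_contra! hall
  have h0 := left_mem_Icc.2 hω.le
  have hone : l 0 * ∫ s in (0:ℝ)..ω, G 0 s = 1 := by
    simpa using hall (fun _ => 1) continuous_const (fun _ => rfl) fun _ => zero_le_one
  have hbump : ∀ s₀ ε, 0 < ε → ε ≤ s₀ → ε ≤ ω - s₀ →
      ∫ s in (0:ℝ)..ω, G 0 s * periodicBump ω s₀ ε s = 0 := by
    intro s₀ ε hε hs₀ hs₀'
    have := hall (periodicBump ω s₀ ε) continuous_periodicBump (periodic_periodicBump hω.ne') periodicBump_nonneg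
    rw [periodicBump_zero hω hε.le hs₀ hs₀'] at this
    exact (mul_eq_zero.1 this).resolve_left (left_ne_zero_of_mul_eq_one hone)
  have hG0 : ∀ s ∈ Icc 0 ω, G 0 s = 0 := by
    intro s hs
    have hle := le_of_forall_le_integral_mul_periodicBump hω (hG.continuousOn_apply h0).neg
      (c := 0) (fun s₀ ε hε hs₀ hs₀' => by
        simp [neg_mul, intervalIntegral.integral_neg, hbump s₀ ε hε hs₀ hs₀']) s hs
    have hge := le_of_forall_le_integral_mul_periodicBump hω (hG.continuousOn_apply h0)
      (c := 0) (fun s₀ ε hε hs₀ hs₀' => by simp [hbump s₀ ε hε hs₀ hs₀']) s hs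
    simp only [Pi.neg_apply, neg_nonneg] at hle
    exact le_antisymm hle hge
  have hzero : ∫ s in (0:ℝ)..ω, G 0 s = 0 := by
    rw [integral_congr (g := fun _ => 0) fun s hs =>
      hG0 s (by rwa [uIcc_of_le hω.le] at hs)]
    simp
  rw [hzero, mul_zero] at hone
  exact zero_ne_one hone

lemma le_integral_mul (hG : IsGreensFunction ω p l G) (hω : 0 < ω)
    (hlper : Function.Periodic l ω) {c : ℝ}
    (hc : ∀ h u : ℝ → ℝ, ContinuousOn h (Icc 0 ω) → (∀ t ∈ Icc 0 ω, 0 ≤ h t) →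
      IsPeriodicSolution ω p l h u → ∀ t ∈ Icc 0 ω, c * ∫ s in (0:ℝ)..ω, h s ≤ u t)
    {h : ℝ → ℝ} (hh : Continuous h) (hhper : Function.Periodic h ω) (hh0 : ∀ s, 0 ≤ h s)
    {t : ℝ} (ht : t ∈ Icc 0 ω) :
    c * ∫ s in (0:ℝ)..ω, h s ≤ ∫ s in (0:ℝ)..ω, G t s * h s := by
  have hgood : ∀ k : ℝ → ℝ, Continuous k → Function.Periodic k ω → (∀ s, 0 ≤ k s) →
      l 0 * ∫ s in (0:ℝ)..ω, G 0 s * k s ≠ k 0 →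
      c * ∫ s in (0:ℝ)..ω, k s ≤ ∫ s in (0:ℝ)..ω, G t s * k s :=
    fun k hk hkper hk0 hne => hc k _ hk.continuousOn (fun s _ => hk0 s)
      ((hG.isPeriodicSolution_or hω hlper hk hkper).resolve_right hne) t ht
  rcases ne_or_eq (l 0 * ∫ s in (0:ℝ)..ω, G 0 s * h s) (h 0) with hne | hne
  · exact hgood h hh hhper hh0 hne
  -- perturb `h` off the degenerate hyperplane and let the perturbation tend to zero
  obtain ⟨g, hg, hgper, hg0, hgne⟩ := hG.exists_nonneg_ne hω
  refine le_of_forall_pos_add_mul_le (b := c * ∫ s in (0:ℝ)..ω, g s)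
    (b' := ∫ s in (0:ℝ)..ω, G t s * g s) fun μ hμ => ?_
  have hk := hgood (fun s => h s + μ * g s) (hh.add (continuous_const.mul hg))
    (fun s => by simp only [hhper s, hgper s]) (fun s => add_nonneg (hh0 s)
      (mul_nonneg hμ.le (hg0 s))) ?_
  · rw [hG.integral_mul_add_mul hω.le ht hh hg, integral_add (hh.intervalIntegrable 0 ω)
      ((hg.intervalIntegrable 0 ω).const_mul μ), intervalIntegral.integral_const_mul] at hk
    linear_combination hk
  · rw [hG.integral_mul_add_mul hω.le (left_mem_Icc.2 hω.le) hh hg]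
    intro heq
    refine hgne (mul_left_cancel₀ hμ.ne' ?_)
    linear_combination heq - hne

end IsGreensFunction

theorem green_positive_of_condition_A1_general
    (ω : ℝ) (hω : 0 < ω) (p l : ℝ → ℝ)
    (hlper : Function.Periodic l ω)
    (a₁ a₂ : ℝ → ℝ)
    (ha₁ : ContDiff ℝ 1 a₁) (ha₁per : Function.Periodic a₁ ω)
    (ha₂ : Continuous a₂)
    (ha₁int : 0 < ∫ t in (0:ℝ)..ω, a₁ t)
    (ha₂int : 0 < ∫ t in (0:ℝ)..ω, a₂ t)
    (hsum : ∀ t, a₁ t + a₂ t = p t)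
    (hprod : ∀ t, deriv a₁ t + a₁ t * a₂ t = l t) :
    ∀ G : ℝ → ℝ → ℝ, IsGreensFunction ω p l G →
      ∀ t ∈ Set.Icc 0 ω, ∀ s ∈ Set.Icc 0 ω, 0 < G t s := by
  intro G hG t ht s hs
  obtain ⟨c, hc, hbound⟩ :=
    exists_pos_lowerBound_of_factorization hω ha₁ ha₁per ha₂ ha₁int ha₂int hsum hprod
  refine hc.trans_le (le_of_forall_le_integral_mul_periodicBump hω (hG.continuousOn_apply ht)
    (fun s₀ ε _ _ _ => ?_) s hs)
  exact hG.le_integral_mul hω hlper hbound continuous_periodicBump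
    (periodic_periodicBump hω.ne') periodicBump_nonneg ht

theorem green_positive_of_condition_A1
    (ω : ℝ) (hω : 0 < ω) (p l : ℝ → ℝ)
    (hp : Continuous p) (hpper : Function.Periodic p ω)
    (hl : Continuous l) (hlper : Function.Periodic l ω)
    (a₁ a₂ : ℝ → ℝ)
    (ha₁ : ContDiff ℝ 1 a₁) (ha₁per : Function.Periodic a₁ ω)
    (ha₂ : Continuous a₂) (ha₂per : Function.Periodic a₂ ω)
    (ha₁int : 0 < ∫ t in (0:ℝ)..ω, a₁ t)
    (ha₂int : 0 < ∫ t in (0:ℝ)..ω, a₂ t)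
    (hsum : ∀ t, a₁ t + a₂ t = p t)
    (hprod : ∀ t, deriv a₁ t + a₁ t * a₂ t = l t) :
    ∀ G : ℝ → ℝ → ℝ, IsGreensFunction ω p l G →
      ∀ t ∈ Set.Icc 0 ω, ∀ s ∈ Set.Icc 0 ω, 0 < G t s :=
  green_positive_of_condition_A1_general ω hω p l hlper a₁ a₂ ha₁ ha₁per ha₂ ha₁int ha₂int hsum
    hprod
end

section
/- Fix ω > 0, ρ₁ > 0, ρ₂ > 0 and set α = 1/(ρ₁+1). Let p, q, b : ℝ → ℝ be continuous ω-periodic functions and c, e : ℝ → (0,∞) continuous ω-periodic functions. Then a twice continuously differentiable ω-periodic function x : ℝ → (0,∞) satisfies x''(t) + p(t)x'(t) + q(t)x(t) = b(t)/x(t)^{ρ₁} + c(t)/x(t)^{ρ₂} + e(t) for all t if and only if the function y = x^{1/α} = x^{ρ₁+1} is a twice continuously differentiable ω-periodic function with values in (0,∞) satisfying y''(t) + p(t)y'(t) + (q(t)/α)y(t) = (c(t)/α)y(t)^{1−α−αρ₂} + (e(t)/α)y(t)^{1−α} + (1−α)|y'(t)|²/y(t) + b(t)/α for all t. -/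
/-!
With `y = x ^ (ρ₁ + 1)` one has `y' = (ρ₁ + 1) x ^ ρ₁ x'` and
`y'' = (ρ₁ + 1) (ρ₁ x ^ (ρ₁ - 1) x'² + x ^ ρ₁ x'')`, and `ρ₁ (ρ₁ + 1) x ^ (ρ₁ - 1) x'²` is exactly
`(1 - α) |y'|² / y`. Hence, pointwise, the equation for `y` is the equation for `x` multiplied by
the positive factor `(ρ₁ + 1) x ^ ρ₁`, and the two are equivalent.
-/

open Real

section RpowDeriv

variable {f : ℝ → ℝ} (s : ℝ)

theorem deriv_rpow_add_one_of_ne_zero (hf : Differentiable ℝ f) (hf0 : ∀ t, f t ≠ 0) :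
    deriv (fun t => f t ^ (s + 1)) = fun t => (s + 1) * f t ^ s * deriv f t := by
  funext t
  rw [deriv_rpow_const (hf t) (Or.inl (hf0 t)), add_sub_cancel_right]
  ring

theorem deriv_deriv_rpow_add_one_of_ne_zero (hf : Differentiable ℝ f)
    (hf' : Differentiable ℝ (deriv f)) (hf0 : ∀ t, f t ≠ 0) :
    deriv (deriv fun t => f t ^ (s + 1)) = fun t =>
      (s + 1) * (s * f t ^ (s - 1) * deriv f t ^ 2 + f t ^ s * deriv (deriv f) t) := by
  rw [deriv_rpow_add_one_of_ne_zero s hf hf0]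
  funext t
  have hpow := (hf t).hasDerivAt.rpow_const (p := s) (Or.inl (hf0 t))
  refine ((hpow.const_mul (s + 1)).mul (hf' t).hasDerivAt).deriv.trans ?_
  ring

end RpowDeriv

theorem ode_iff_rpow_substituted_ode {ρ₁ ρ₂ α X X' X'' P Q B C E : ℝ} (hX : 0 < X)
    (hρ : ρ₁ + 1 ≠ 0) (hα : α = 1 / (ρ₁ + 1)) :
    X'' + P * X' + Q * X = B / X ^ ρ₁ + C / X ^ ρ₂ + E ↔
      (ρ₁ + 1) * (ρ₁ * X ^ (ρ₁ - 1) * X' ^ 2 + X ^ ρ₁ * X'')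
          + P * ((ρ₁ + 1) * X ^ ρ₁ * X') + Q / α * X ^ (ρ₁ + 1) =
        C / α * (X ^ (ρ₁ + 1)) ^ (1 - α - α * ρ₂) + E / α * (X ^ (ρ₁ + 1)) ^ (1 - α)
          + (1 - α) * |(ρ₁ + 1) * X ^ ρ₁ * X'| ^ 2 / X ^ (ρ₁ + 1) + B / α := by
  have hexp₁ : (ρ₁ + 1) * (1 - α - α * ρ₂) = ρ₁ - ρ₂ := by rw [hα]; field_simp; ring
  have hexp₂ : (ρ₁ + 1) * (1 - α) = ρ₁ := by rw [hα]; field_simp; ring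
  rw [← rpow_mul hX.le, ← rpow_mul hX.le, hexp₁, hexp₂, rpow_sub_one hX.ne', rpow_sub hX,
    rpow_add_one hX.ne', sq_abs, hα]
  have hA : 0 < X ^ ρ₁ := rpow_pos_of_pos hX ρ₁
  have hK : 0 < X ^ ρ₂ := rpow_pos_of_pos hX ρ₂
  generalize X ^ ρ₁ = A at *
  generalize X ^ ρ₂ = K at *
  field_simp
  constructor
  · intro h
    linear_combination X * h
  · intro h
    apply mul_left_cancel₀ hX.ne'
    linear_combination h

theorem transformation_equivalence_general
    (ω ρ₁ ρ₂ α : ℝ) (hρ₁ : 0 < ρ₁)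
    (hα : α = 1 / (ρ₁ + 1))
    (p q b c e : ℝ → ℝ)
    (x : ℝ → ℝ) (hx : ContDiff ℝ 2 x) (hxper : Function.Periodic x ω)
    (hxpos : ∀ t, 0 < x t) :
    (∀ t, deriv (deriv x) t + p t * deriv x t + q t * x t =
        b t / x t ^ ρ₁ + c t / x t ^ ρ₂ + e t) ↔
    (ContDiff ℝ 2 (fun t => x t ^ (ρ₁ + 1)) ∧
      Function.Periodic (fun t => x t ^ (ρ₁ + 1)) ω ∧
      (∀ t, 0 < x t ^ (ρ₁ + 1)) ∧
      (∀ t, deriv (deriv (fun τ => x τ ^ (ρ₁ + 1))) t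
          + p t * deriv (fun τ => x τ ^ (ρ₁ + 1)) t
          + (q t / α) * x t ^ (ρ₁ + 1) =
        (c t / α) * (x t ^ (ρ₁ + 1)) ^ (1 - α - α * ρ₂)
          + (e t / α) * (x t ^ (ρ₁ + 1)) ^ (1 - α)
          + (1 - α) * |deriv (fun τ => x τ ^ (ρ₁ + 1)) t| ^ 2 / x t ^ (ρ₁ + 1)
          + b t / α)) := by
  have hx₁ : Differentiable ℝ x := hx.differentiable two_ne_zero
  have hx₀ : ∀ t, x t ≠ 0 := fun t => (hxpos t).ne'
  have hρ : ρ₁ + 1 ≠ 0 := by positivity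
  rw [deriv_deriv_rpow_add_one_of_ne_zero ρ₁ hx₁ hx.differentiable_deriv_two hx₀,
    deriv_rpow_add_one_of_ne_zero ρ₁ hx₁ hx₀]
  exact ⟨fun h => ⟨hx.rpow_const_of_ne hx₀, hxper.comp (· ^ (ρ₁ + 1)),
      fun t => rpow_pos_of_pos (hxpos t) _,
      fun t => (ode_iff_rpow_substituted_ode (hxpos t) hρ hα).1 (h t)⟩,
    fun h t => (ode_iff_rpow_substituted_ode (hxpos t) hρ hα).2 (h.2.2.2 t)⟩

theorem transformation_equivalence
    (ω ρ₁ ρ₂ α : ℝ) (hω : 0 < ω) (hρ₁ : 0 < ρ₁) (hρ₂ : 0 < ρ₂)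
    (hα : α = 1 / (ρ₁ + 1))
    (p q b c e : ℝ → ℝ)
    (hp : Continuous p) (hpper : Function.Periodic p ω)
    (hq : Continuous q) (hqper : Function.Periodic q ω)
    (hb : Continuous b) (hbper : Function.Periodic b ω)
    (hc : Continuous c) (hcper : Function.Periodic c ω) (hcpos : ∀ t, 0 < c t)
    (he : Continuous e) (heper : Function.Periodic e ω) (hepos : ∀ t, 0 < e t)
    (x : ℝ → ℝ) (hx : ContDiff ℝ 2 x) (hxper : Function.Periodic x ω)
    (hxpos : ∀ t, 0 < x t) :
    (∀ t, deriv (deriv x) t + p t * deriv x t + q t * x t =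
        b t / x t ^ ρ₁ + c t / x t ^ ρ₂ + e t) ↔
    (ContDiff ℝ 2 (fun t => x t ^ (ρ₁ + 1)) ∧
      Function.Periodic (fun t => x t ^ (ρ₁ + 1)) ω ∧
      (∀ t, 0 < x t ^ (ρ₁ + 1)) ∧
      (∀ t, deriv (deriv (fun τ => x τ ^ (ρ₁ + 1))) t
          + p t * deriv (fun τ => x τ ^ (ρ₁ + 1)) t
          + (q t / α) * x t ^ (ρ₁ + 1) =
        (c t / α) * (x t ^ (ρ₁ + 1)) ^ (1 - α - α * ρ₂)
          + (e t / α) * (x t ^ (ρ₁ + 1)) ^ (1 - α)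
          + (1 - α) * |deriv (fun τ => x τ ^ (ρ₁ + 1)) t| ^ 2 / x t ^ (ρ₁ + 1)
          + b t / α)) :=
  transformation_equivalence_general ω ρ₁ ρ₂ α hρ₁ hα p q b c e x hx hxper hxpos
end

section
/- The differential equation x''(t) + (1/40)x(t) = (1 + 2cos(3t))/x(t)^{3/2} + e^{2sin(3t)}/x(t)^{13/10} + 10 + cos(3t) has at least one positive (2π/3)-periodic solution, i.e. there exists a twice continuously differentiable function x : ℝ → (0,∞) with x(t + 2π/3) = x(t) for all t that satisfies the equation for all t ∈ ℝ. -/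
/-!
For `ω > 0` and `ωT ≤ π`, the `T`-periodic solution of `x'' + ω²x = g` is `G g`, the integral of
`g` over one period against the kernel `cos (ω (t + T/2 - s)) / (2ω sin (ωT/2))`. This kernel is
nonnegative with total mass `1/ω²`, so `G` is monotone, sends functions with values in
`[ω²a, ω²b]` to functions with values in `[a, b]`, and is `1/ω²`-Lipschitz for the sup norm.
Hence if `f(t, ·)` maps `[a, b]` into `[ω²a, ω²b]` and is `K`-Lipschitz there with `K < ω²`,
then `x ↦ G (f(·, x(·)))` is a contraction of the complete set of `T`-periodic continuous
functions with values in `[a, b]`, and its fixed point solves `x'' + ω²x = f(t, x)`.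
Here `ω² = 1/40` and `[a, b] = [320, 480]`: on this band the right-hand side stays in `[8, 12]`
and is `1/100`-Lipschitz.
-/

open Real Function Set intervalIntegral
open scoped NNReal

lemma contDiff_two_of_hasDerivAt {x x' x'' : ℝ → ℝ} (hx : ∀ t, HasDerivAt x (x' t) t)
    (hx' : ∀ t, HasDerivAt x' (x'' t) t) (hx'' : Continuous x'') :
    ContDiff ℝ 2 x ∧ deriv (deriv x) = x'' := by
  have h₁ : deriv x = x' := funext fun t => (hx t).deriv
  have h₂ : deriv x' = x'' := funext fun t => (hx' t).deriv
  refine ⟨?_, by rw [h₁, h₂]⟩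
  rw [show (2 : WithTop ℕ∞) = 1 + 1 from rfl, contDiff_succ_iff_deriv, h₁]
  exact ⟨fun t => (hx t).differentiableAt, by simp,
    contDiff_one_iff_deriv.2 ⟨fun t => (hx' t).differentiableAt, h₂ ▸ hx''⟩⟩

section PeriodicGreen

variable {g : ℝ → ℝ}

lemma hasDerivAt_integral_add_const (hg : Continuous g) (T t : ℝ) :
    HasDerivAt (fun t => ∫ s in t..t + T, g s) (g (t + T) - g t) t := by
  have hprim (u : ℝ) : HasDerivAt (fun t => ∫ s in (0 : ℝ)..t, g s) (g u) u :=
    (hg.integral_hasStrictDerivAt 0 u).hasDerivAt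
  have hsplit : (fun t => ∫ s in t..t + T, g s) =
      fun t => (∫ s in (0 : ℝ)..t + T, g s) - ∫ s in (0 : ℝ)..t, g s := by
    ext t
    exact (integral_interval_sub_left (hg.intervalIntegrable _ _) (hg.intervalIntegrable _ _)).symm
  rw [hsplit]
  exact ((hprim (t + T)).comp_add_const t T).sub (hprim t)

lemma integral_cos_mul_sub (hg : Continuous g) (ω θ t T : ℝ) :
    ∫ s in t..t + T, cos (ω * (θ - s)) * g s =
      cos (ω * θ) * (∫ s in t..t + T, cos (ω * s) * g s)
        + sin (ω * θ) * ∫ s in t..t + T, sin (ω * s) * g s := by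
  simp only [mul_sub ω θ, cos_sub, add_mul, mul_assoc]
  rw [integral_add, integral_const_mul, integral_const_mul] <;>
    exact (by fun_prop : Continuous _).intervalIntegrable _ _

lemma integral_sin_mul_sub (hg : Continuous g) (ω θ t T : ℝ) :
    ∫ s in t..t + T, sin (ω * (θ - s)) * g s =
      sin (ω * θ) * (∫ s in t..t + T, cos (ω * s) * g s)
        - cos (ω * θ) * ∫ s in t..t + T, sin (ω * s) * g s := by
  simp only [mul_sub ω θ, sin_sub, sub_mul, mul_assoc]
  rw [integral_sub, integral_const_mul, integral_const_mul] <;>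
    exact (by fun_prop : Continuous _).intervalIntegrable _ _

lemma hasDerivAt_integral_cos_mul (hg : Continuous g) (ω c T t : ℝ) :
    HasDerivAt (fun t => ∫ s in t..t + T, cos (ω * (t + c - s)) * g s)
      (-ω * (∫ s in t..t + T, sin (ω * (t + c - s)) * g s)
        + cos (ω * (c - T)) * g (t + T) - cos (ω * c) * g t) t := by
  have hθ : HasDerivAt (fun t => ω * (t + c)) ω t := by
    simpa using ((hasDerivAt_id t).add_const c).const_mul ω
  have hC := hasDerivAt_integral_add_const (g := fun s => cos (ω * s) * g s) (by fun_prop) T t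
  have hS := hasDerivAt_integral_add_const (g := fun s => sin (ω * s) * g s) (by fun_prop) T t
  simp only [integral_cos_mul_sub hg, integral_sin_mul_sub hg]
  refine (hθ.cos.mul hC |>.add (hθ.sin.mul hS)).congr_deriv ?_
  rw [show ω * (c - T) = ω * (t + c) - ω * (t + T) by ring,
    show ω * c = ω * (t + c) - ω * t by ring, cos_sub, cos_sub]
  ring

lemma hasDerivAt_integral_sin_mul (hg : Continuous g) (ω c T t : ℝ) :
    HasDerivAt (fun t => ∫ s in t..t + T, sin (ω * (t + c - s)) * g s)
      (ω * (∫ s in t..t + T, cos (ω * (t + c - s)) * g s)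
        + sin (ω * (c - T)) * g (t + T) - sin (ω * c) * g t) t := by
  have hθ : HasDerivAt (fun t => ω * (t + c)) ω t := by
    simpa using ((hasDerivAt_id t).add_const c).const_mul ω
  have hC := hasDerivAt_integral_add_const (g := fun s => cos (ω * s) * g s) (by fun_prop) T t
  have hS := hasDerivAt_integral_add_const (g := fun s => sin (ω * s) * g s) (by fun_prop) T t
  simp only [integral_cos_mul_sub hg, integral_sin_mul_sub hg]
  refine (hθ.sin.mul hC |>.sub (hθ.cos.mul hS)).congr_deriv ?_
  rw [show ω * (c - T) = ω * (t + c) - ω * (t + T) by ring,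
    show ω * c = ω * (t + c) - ω * t by ring, sin_sub, sin_sub]
  ring

variable {ω T : ℝ}

noncomputable def periodicGreen (ω T : ℝ) (g : ℝ → ℝ) (t : ℝ) : ℝ :=
  (∫ s in t..t + T, cos (ω * (t + T / 2 - s)) * g s) / (2 * ω * sin (ω * T / 2))

noncomputable def periodicGreenDeriv (ω T : ℝ) (g : ℝ → ℝ) (t : ℝ) : ℝ :=
  -(∫ s in t..t + T, sin (ω * (t + T / 2 - s)) * g s) / (2 * sin (ω * T / 2))

lemma continuous_periodicGreen (hg : Continuous g) : Continuous (periodicGreen ω T g) :=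
  continuous_iff_continuousAt.2 fun t =>
    ((hasDerivAt_integral_cos_mul hg ω (T / 2) T t).div_const _).continuousAt

lemma hasDerivAt_periodicGreen (hω : ω ≠ 0) (hg : Continuous g) (hgT : Periodic g T) (t : ℝ) :
    HasDerivAt (periodicGreen ω T g) (periodicGreenDeriv ω T g t) t := by
  refine ((hasDerivAt_integral_cos_mul hg ω (T / 2) T t).div_const _).congr_deriv ?_
  rw [hgT t, show ω * (T / 2 - T) = -(ω * T / 2) by ring, cos_neg, mul_div_assoc,
    periodicGreenDeriv]
  field_simp [hω]
  ring

lemma hasDerivAt_periodicGreenDeriv (hsin : sin (ω * T / 2) ≠ 0)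
    (hg : Continuous g) (hgT : Periodic g T) (t : ℝ) :
    HasDerivAt (periodicGreenDeriv ω T g) (g t - ω ^ 2 * periodicGreen ω T g t) t := by
  refine ((hasDerivAt_integral_sin_mul hg ω (T / 2) T t).neg.div_const _).congr_deriv ?_
  rw [hgT t, show ω * (T / 2 - T) = -(ω * T / 2) by ring, sin_neg, mul_div_assoc, periodicGreen]
  field_simp
  ring

lemma periodicGreen_periodic (hgT : Periodic g T) : Periodic (periodicGreen ω T g) T := by
  intro t
  simp only [periodicGreen]
  congr 1
  rw [← integral_comp_add_right]
  refine integral_congr fun s _ => ?_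
  simp only [hgT s]
  ring_nf

lemma periodicGreen_const (hω : ω ≠ 0) (hsin : sin (ω * T / 2) ≠ 0) (c t : ℝ) :
    periodicGreen ω T (fun _ => c) t = c / ω ^ 2 := by
  simp only [periodicGreen, integral_mul_const, integral_comp_sub_left (fun u => cos (ω * u)),
    integral_comp_mul_left (fun u => cos u) hω, integral_cos, smul_eq_mul]
  rw [show ω * (t + T / 2 - t) = ω * T / 2 by ring,
    show ω * (t + T / 2 - (t + T)) = -(ω * T / 2) by ring, sin_neg]
  field_simp
  ring

lemma periodicGreen_sub {g₁ g₂ : ℝ → ℝ} (hg₁ : Continuous g₁) (hg₂ : Continuous g₂) (t : ℝ) :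
    periodicGreen ω T (fun s => g₁ s - g₂ s) t =
      periodicGreen ω T g₁ t - periodicGreen ω T g₂ t := by
  simp only [periodicGreen, mul_sub]
  rw [integral_sub, sub_div] <;> exact (by fun_prop : Continuous _).intervalIntegrable _ _

lemma sin_mul_div_two_pos (hω : 0 < ω) (hT : 0 < T) (hωT : ω * T ≤ π) : 0 < sin (ω * T / 2) :=
  sin_pos_of_pos_of_lt_pi (by positivity) (by linarith [pi_pos])

lemma periodicGreen_mono (hω : 0 < ω) (hT : 0 < T) (hωT : ω * T ≤ π) {g₁ g₂ : ℝ → ℝ}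
    (hg₁ : Continuous g₁) (hg₂ : Continuous g₂) (h : ∀ s, g₁ s ≤ g₂ s) (t : ℝ) :
    periodicGreen ω T g₁ t ≤ periodicGreen ω T g₂ t := by
  have hker : ∀ s ∈ Icc t (t + T), 0 ≤ cos (ω * (t + T / 2 - s)) := fun s hs =>
    cos_nonneg_of_mem_Icc ⟨by nlinarith [hs.2], by nlinarith [hs.1]⟩
  refine div_le_div_of_nonneg_right ?_ (by have := sin_mul_div_two_pos hω hT hωT; positivity)
  exact integral_mono_on (by linarith) ((by fun_prop : Continuous _).intervalIntegrable _ _)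
    ((by fun_prop : Continuous _).intervalIntegrable _ _)
    fun s hs => mul_le_mul_of_nonneg_left (h s) (hker s hs)

lemma periodicGreen_mem_Icc (hω : 0 < ω) (hT : 0 < T) (hωT : ω * T ≤ π) {a b : ℝ}
    (hg : Continuous g) (hgab : ∀ s, g s ∈ Icc (ω ^ 2 * a) (ω ^ 2 * b)) (t : ℝ) :
    periodicGreen ω T g t ∈ Icc a b := by
  have hconst (c : ℝ) : periodicGreen ω T (fun _ => ω ^ 2 * c) t = c := by
    rw [periodicGreen_const hω.ne' (sin_mul_div_two_pos hω hT hωT).ne']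
    field_simp
  constructor
  · simpa only [hconst] using
      periodicGreen_mono hω hT hωT continuous_const hg (fun s => (hgab s).1) t
  · simpa only [hconst] using
      periodicGreen_mono hω hT hωT hg continuous_const (fun s => (hgab s).2) t

lemma abs_periodicGreen_sub_le (hω : 0 < ω) (hT : 0 < T) (hωT : ω * T ≤ π) {g₁ g₂ : ℝ → ℝ}
    (hg₁ : Continuous g₁) (hg₂ : Continuous g₂) {ε : ℝ} (hε : ∀ s, |g₁ s - g₂ s| ≤ ε) (t : ℝ) :
    |periodicGreen ω T g₁ t - periodicGreen ω T g₂ t| ≤ ε / ω ^ 2 := by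
  have hscale : ω ^ 2 * (ε / ω ^ 2) = ε := mul_div_cancel₀ _ (by positivity)
  rw [← periodicGreen_sub hg₁ hg₂, abs_le]
  refine periodicGreen_mem_Icc hω hT hωT (hg₁.sub hg₂) (fun s => ?_) t
  rw [mul_neg, hscale]
  exact abs_le.1 (hε s)

end PeriodicGreen

section PeriodicSolution

variable {ω T a b : ℝ} {f : ℝ → ℝ → ℝ}

open BoundedContinuousFunction

def periodicBand (T a b : ℝ) : Set (ℝ →ᵇ ℝ) :=
  {x | Periodic x T ∧ ∀ t, x t ∈ Icc a b}

lemma isClosed_periodicBand (T a b : ℝ) : IsClosed (periodicBand T a b) := by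
  simp only [periodicBand, Periodic, ofPred_and, ofPred_forall]
  exact (isClosed_iInter fun t =>
      isClosed_eq (continuous_eval_const _) (continuous_eval_const _)).inter
    (isClosed_iInter fun t => isClosed_Icc.preimage (continuous_eval_const t))

lemma continuous_comp_of_mem_Icc (hf : ContinuousOn (uncurry f) (univ ×ˢ Icc a b)) {x : ℝ → ℝ}
    (hx : Continuous x) (hxab : ∀ t, x t ∈ Icc a b) : Continuous fun t => f t (x t) :=
  hf.comp_continuous (continuous_id.prodMk hx) fun t => ⟨mem_univ t, hxab t⟩

noncomputable def greenMap (hω : 0 < ω) (hT : 0 < T) (hωT : ω * T ≤ π)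
    (hf : ContinuousOn (uncurry f) (univ ×ˢ Icc a b)) (hfT : ∀ t y, f (t + T) y = f t y)
    (hfab : ∀ t, ∀ y ∈ Icc a b, f t y ∈ Icc (ω ^ 2 * a) (ω ^ 2 * b))
    (x : periodicBand T a b) : periodicBand T a b :=
  have hg := continuous_comp_of_mem_Icc hf x.1.continuous x.2.2
  have hmem := periodicGreen_mem_Icc hω hT hωT hg fun s => hfab s _ (x.2.2 s)
  ⟨.mkOfBound ⟨periodicGreen ω T fun s => f s (x.1 s), continuous_periodicGreen hg⟩ (b - a)
      fun t u => dist_le_of_mem_Icc (hmem t) (hmem u),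
    periodicGreen_periodic fun s => by simp only [hfT, x.2.1 s], hmem⟩

lemma contractingWith_greenMap (hω : 0 < ω) (hT : 0 < T) (hωT : ω * T ≤ π)
    (hf : ContinuousOn (uncurry f) (univ ×ˢ Icc a b)) (hfT : ∀ t y, f (t + T) y = f t y)
    (hfab : ∀ t, ∀ y ∈ Icc a b, f t y ∈ Icc (ω ^ 2 * a) (ω ^ 2 * b)) {K : ℝ≥0}
    (hfK : ∀ t, LipschitzOnWith K (f t) (Icc a b)) (hK : (K : ℝ) < ω ^ 2) :
    ContractingWith (K / (ω ^ 2).toNNReal) (greenMap hω hT hωT hf hfT hfab) := by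
  have hω2 : 0 < ω ^ 2 := by positivity
  refine ⟨(div_lt_one (by simpa using hω2)).2 (Real.lt_toNNReal_iff_coe_lt.2 hK), ?_⟩
  refine LipschitzWith.of_dist_le_mul fun x y => ?_
  rw [NNReal.coe_div, Real.coe_toNNReal _ hω2.le, Subtype.dist_eq, Subtype.dist_eq,
    div_mul_eq_mul_div, dist_le (by positivity)]
  intro t
  refine abs_periodicGreen_sub_le hω hT hωT (continuous_comp_of_mem_Icc hf x.1.continuous x.2.2)
    (continuous_comp_of_mem_Icc hf y.1.continuous y.2.2) (fun s => ?_) t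
  calc |f s (x.1 s) - f s (y.1 s)| ≤ K * dist (x.1 s) (y.1 s) :=
        (hfK s).dist_le_mul _ (x.2.2 s) _ (y.2.2 s)
    _ ≤ K * dist x.1 y.1 := by gcongr; exact dist_coe_le_dist s

theorem exists_periodic_solution_of_lipschitzOnWith (hω : 0 < ω) (hT : 0 < T) (hωT : ω * T ≤ π)
    (hab : a ≤ b) (hf : ContinuousOn (uncurry f) (univ ×ˢ Icc a b))
    (hfT : ∀ t y, f (t + T) y = f t y)
    (hfab : ∀ t, ∀ y ∈ Icc a b, f t y ∈ Icc (ω ^ 2 * a) (ω ^ 2 * b)) {K : ℝ≥0}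
    (hfK : ∀ t, LipschitzOnWith K (f t) (Icc a b)) (hK : (K : ℝ) < ω ^ 2) :
    ∃ x : ℝ → ℝ, ContDiff ℝ 2 x ∧ (∀ t, x t ∈ Icc a b) ∧ Periodic x T ∧
      ∀ t, deriv (deriv x) t + ω ^ 2 * x t = f t (x t) := by
  have := (isClosed_periodicBand T a b).completeSpace_coe
  have : Nonempty (periodicBand T a b) := ⟨⟨const ℝ a, fun _ => rfl, fun _ => ⟨le_rfl, hab⟩⟩⟩
  have hΦ := contractingWith_greenMap hω hT hωT hf hfT hfab hfK hK
  set x := ContractingWith.fixedPoint _ hΦ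
  set g := fun s => f s (x.1 s)
  have hg : Continuous g := continuous_comp_of_mem_Icc hf x.1.continuous x.2.2
  have hgT : Periodic g T := fun s => by simp only [g, hfT, x.2.1 s]
  have hsin := (sin_mul_div_two_pos hω hT hωT).ne'
  have hx : ⇑x.1 = periodicGreen ω T g :=
    (congrArg (fun y : periodicBand T a b => ⇑y.1) hΦ.fixedPoint_isFixedPt).symm
  obtain ⟨hC2, hx''⟩ := contDiff_two_of_hasDerivAt (x := x.1) (x'' := fun t => g t - ω ^ 2 * x.1 t)
    (fun t => by rw [hx]; exact hasDerivAt_periodicGreen hω.ne' hg hgT t)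
    (fun t => by rw [hx]; exact hasDerivAt_periodicGreenDeriv hsin hg hgT t)
    (hg.sub (continuous_const.mul x.1.continuous))
  refine ⟨x.1, hC2, x.2.2, x.2.1, fun t => ?_⟩
  rw [hx'']
  ring

end PeriodicSolution

lemma abs_rpow_neg_sub_rpow_neg_le {a p y z : ℝ} (ha : 0 < a) (hp : 0 ≤ p) (hy : a ≤ y)
    (hz : a ≤ z) : |y ^ (-p) - z ^ (-p)| ≤ p * a ^ (-p - 1) * |y - z| := by
  have hderiv : ∀ w ∈ Ici a, HasDerivWithinAt (fun w => w ^ (-p)) (-p * w ^ (-p - 1)) (Ici a) w :=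
    fun w hw => (hasDerivAt_rpow_const (Or.inl (ha.trans_le hw).ne')).hasDerivWithinAt
  have hbound : ∀ w ∈ Ici a, ‖-p * w ^ (-p - 1)‖ ≤ p * a ^ (-p - 1) := fun w hw => by
    rw [norm_mul, norm_neg, Real.norm_of_nonneg hp,
      Real.norm_of_nonneg (rpow_pos_of_pos (ha.trans_le hw) _).le]
    exact mul_le_mul_of_nonneg_left (rpow_le_rpow_of_nonpos ha hw (by linarith)) hp
  simpa only [Real.norm_eq_abs] using
    (convex_Ici a).norm_image_sub_le_of_norm_hasDerivWithin_le hderiv hbound hz hy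

lemma exp_two_mul_sin_le (θ : ℝ) : exp (2 * sin θ) ≤ 8 := by
  have he : exp 2 = exp 1 * exp 1 := by rw [← exp_add]; norm_num
  calc exp (2 * sin θ) ≤ exp 2 := exp_le_exp.2 (by linarith [sin_le_one θ])
    _ ≤ 8 := by nlinarith [exp_one_lt_d9, exp_pos 1]

lemma abs_one_add_two_mul_cos_le (θ : ℝ) : |1 + 2 * cos θ| ≤ 3 :=
  abs_le.2 ⟨by linarith [neg_one_le_cos θ], by linarith [cos_le_one θ]⟩

namespace Example41

noncomputable def rhs (t y : ℝ) : ℝ :=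
  (1 + 2 * cos (3 * t)) / y ^ ((3 : ℝ) / 2) + exp (2 * sin (3 * t)) / y ^ ((13 : ℝ) / 10)
    + 10 + cos (3 * t)

lemma continuousOn_rhs : ContinuousOn (uncurry rhs) (univ ×ˢ Ioi 0) := by
  intro p hp
  have hp0 : p.2 ≠ 0 := (mem_Ioi.1 hp.2).ne'
  have hq (q : ℝ) : p.2 ^ q ≠ 0 := (rpow_pos_of_pos (mem_Ioi.1 hp.2) q).ne'
  refine ContinuousAt.continuousWithinAt ?_
  simp only [rhs, uncurry_def]
  fun_prop (disch := first | exact hq _ | exact Or.inl hp0)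

lemma rhs_add_period (t y : ℝ) : rhs (t + 2 * π / 3) y = rhs t y := by
  simp only [rhs, show 3 * (t + 2 * π / 3) = 3 * t + 2 * π by ring, cos_add_two_pi, sin_add_two_pi]

lemma rhs_mem_Icc (t : ℝ) {y : ℝ} (hy : 320 ≤ y) : rhs t y ∈ Icc 8 12 := by
  have hpow {p : ℝ} (hp : 1 ≤ p) : 320 ≤ y ^ p := hy.trans (self_le_rpow_of_one_le (by linarith) hp)
  have h₁ : |(1 + 2 * cos (3 * t)) / y ^ ((3 : ℝ) / 2)| ≤ 3 / 320 := by
    rw [abs_div, abs_of_pos (rpow_pos_of_pos (by linarith) _)]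
    exact div_le_div₀ (by norm_num) (abs_one_add_two_mul_cos_le _) (by norm_num)
      (hpow (by norm_num))
  have h₂ : exp (2 * sin (3 * t)) / y ^ ((13 : ℝ) / 10) ≤ 8 / 320 :=
    div_le_div₀ (by norm_num) (exp_two_mul_sin_le _) (by norm_num) (hpow (by norm_num))
  have h₃ : 0 ≤ exp (2 * sin (3 * t)) / y ^ ((13 : ℝ) / 10) := by positivity
  obtain ⟨h₁l, h₁u⟩ := abs_le.1 h₁
  rw [mem_Icc, rhs]
  constructor <;> linarith [neg_one_le_cos (3 * t), cos_le_one (3 * t)]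

lemma lipschitzOnWith_rhs (t : ℝ) : LipschitzOnWith (1 / 100) (rhs t) (Ici 320) := by
  refine LipschitzOnWith.of_dist_le_mul fun y hy z hz => ?_
  have hy0 : 0 < y := by linarith [mem_Ici.1 hy]
  have hz0 : 0 < z := by linarith [mem_Ici.1 hz]
  have hdecay {q : ℝ} (hq : 1 ≤ q) : (320 : ℝ) ^ (-q - 1) ≤ 1 / 102400 := by
    calc (320 : ℝ) ^ (-q - 1) ≤ 320 ^ (-2 : ℝ) :=
          rpow_le_rpow_of_exponent_le (by norm_num) (by linarith)
      _ = 1 / 102400 := by rw [rpow_neg (by norm_num)]; norm_num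
  have hdiff : rhs t y - rhs t z =
      (1 + 2 * cos (3 * t)) * (y ^ (-(3 / 2 : ℝ)) - z ^ (-(3 / 2 : ℝ)))
      + exp (2 * sin (3 * t)) * (y ^ (-(13 / 10 : ℝ)) - z ^ (-(13 / 10 : ℝ))) := by
    simp only [rhs, rpow_neg hy0.le, rpow_neg hz0.le]
    ring
  have l₁ := abs_rpow_neg_sub_rpow_neg_le (p := 3 / 2) (by norm_num) (by norm_num) hy hz
  have l₂ := abs_rpow_neg_sub_rpow_neg_le (p := 13 / 10) (by norm_num) (by norm_num) hy hz
  have d₁ := hdecay (q := 3 / 2) (by norm_num)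
  have d₂ := hdecay (q := 13 / 10) (by norm_num)
  rw [Real.dist_eq, Real.dist_eq, hdiff]
  calc _ ≤ 3 * (3 / 2 * 320 ^ (-(3 / 2 : ℝ) - 1) * |y - z|)
        + 8 * (13 / 10 * 320 ^ (-(13 / 10 : ℝ) - 1) * |y - z|) := by
        refine (abs_add_le _ _).trans (add_le_add ?_ ?_) <;> rw [abs_mul]
        · exact mul_le_mul (abs_one_add_two_mul_cos_le _) l₁ (abs_nonneg _) (by norm_num)
        · rw [abs_of_pos (exp_pos _)]
          exact mul_le_mul (exp_two_mul_sin_le _) l₂ (abs_nonneg _) (by norm_num)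
    _ ≤ _ := by push_cast; nlinarith [abs_nonneg (y - z)]

end Example41

open Example41 in
theorem example_4_1 :
    ∃ x : ℝ → ℝ,
      ContDiff ℝ 2 x ∧ (∀ t, 0 < x t) ∧
      (∀ t, x (t + 2 * Real.pi / 3) = x t) ∧
      ∀ t, deriv (deriv x) t + (1 / 40) * x t =
        (1 + 2 * Real.cos (3 * t)) / x t ^ ((3 : ℝ) / 2)
          + Real.exp (2 * Real.sin (3 * t)) / x t ^ ((13 : ℝ) / 10)
          + 10 + Real.cos (3 * t) := by
  set ω := √(1 / 40)
  have hω : 0 < ω := sqrt_pos.2 (by norm_num)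
  have hω2 : ω ^ 2 = 1 / 40 := sq_sqrt (by norm_num)
  have hωT : ω * (2 * π / 3) ≤ π := by nlinarith [pi_pos]
  obtain ⟨x, hC2, hx, hxT, hode⟩ := exists_periodic_solution_of_lipschitzOnWith (K := 1 / 100)
    hω (by positivity) hωT (by norm_num : (320 : ℝ) ≤ 480)
    (continuousOn_rhs.mono (prod_mono subset_rfl fun y hy => mem_Ioi.2 (by linarith [hy.1])))
    rhs_add_period
    (fun t y hy => by rw [hω2]; norm_num; exact rhs_mem_Icc t hy.1)
    (fun t => (lipschitzOnWith_rhs t).mono Icc_subset_Ici_self)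
    (by rw [hω2]; norm_num)
  exact ⟨x, hC2, fun t => by linarith [(hx t).1], hxT, fun t => hω2 ▸ hode t⟩
end
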